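/- Let V : ℝ → ℝ be differentiable with V(t) = ‖x̃(t)‖² for a continuous x̃ : ℝ → ℝ^N, and suppose that whenever ‖x̃(t)‖ > B (for a fixed B ≥ 0) we have V̇(t) < 0, and moreover V̇(t) ≤ -α(‖x̃(t)‖ - B) for some α > 0 whenever ‖x̃(t)‖ > B. Then limsup_{t→∞} ‖x̃(t)‖ ≤ B. -/

import Mathlib

/-!
Fix `ε > 0`. While `V > (B + ε)²` we have `‖x̃‖ > B + ε`, so `V̇ ≤ -αε`; since `V ≥ 0` this cannot
last forever, hence `V` enters the sublevel set `{V ≤ (B + ε)²}`. That set is forward invariant,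
because `V` is decreasing wherever it lies above the level. So eventually `‖x̃‖ ≤ B + ε`.
-/

open Filter

theorem le_of_deriv_neg_of_lt {f : ℝ → ℝ} {c t₀ t : ℝ} (hf : Differentiable ℝ f)
    (hderiv : ∀ s, c < f s → deriv f s < 0) (ht₀ : f t₀ ≤ c) (ht : t₀ ≤ t) : f t ≤ c := by
  -- Fence at every level `c' > c`: the derivative is controlled only strictly above `c`.
  refine le_of_forall_gt_imp_ge_of_dense fun c' hc' => ?_
  exact image_le_of_deriv_right_lt_deriv_boundary (B := fun _ => c') (B' := fun _ => 0)
    hf.continuous.continuousOn (fun s _ => (hf s).hasDerivAt.hasDerivWithinAt)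
    (ht₀.trans hc'.le) (fun _ => hasDerivAt_const _ _)
    (fun s _ hs => hderiv s (hs ▸ hc')) ⟨ht, le_rfl⟩

theorem exists_le_of_deriv_le_neg {f : ℝ → ℝ} {m c δ : ℝ} (hf : Differentiable ℝ f)
    (hm : ∀ t, m ≤ f t) (hδ : 0 < δ) (hderiv : ∀ t, c < f t → deriv f t ≤ -δ) :
    ∃ t, f t ≤ c := by
  by_contra! habove
  set T := (f 0 - m) / δ + 1 with hT_def
  have hT : 0 ≤ T := by have := hm 0; positivity
  have hδT : δ * T = f 0 - m + δ := by rw [hT_def]; field_simp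
  have hdrop : f T - f 0 ≤ -δ * (T - 0) :=
    image_sub_le_mul_sub_of_deriv_le hf (fun t => hderiv t (habove t)) hT
  linarith [hm T]

theorem eventually_le_of_deriv_le_neg {f : ℝ → ℝ} {m c δ : ℝ} (hf : Differentiable ℝ f)
    (hm : ∀ t, m ≤ f t) (hδ : 0 < δ) (hderiv : ∀ t, c < f t → deriv f t ≤ -δ) :
    ∀ᶠ t in atTop, f t ≤ c := by
  obtain ⟨t₀, ht₀⟩ := exists_le_of_deriv_le_neg hf hm hδ hderiv
  filter_upwards [eventually_ge_atTop t₀] with t ht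
  exact le_of_deriv_neg_of_lt hf (fun s hs => (hderiv s hs).trans_lt (neg_neg_of_pos hδ)) ht₀ ht

theorem limsup_le_of_forall_pos_eventually_le_add {ι : Type*} {l : Filter ι} [l.NeBot]
    {f : ι → ℝ} {m b : ℝ} (hf : ∀ t, m ≤ f t) (h : ∀ ε > 0, ∀ᶠ t in l, f t ≤ b + ε) :
    limsup f l ≤ b :=
  le_of_forall_pos_le_add fun ε hε =>
    limsup_le_of_le (isCoboundedUnder_le_of_le l hf) (h ε hε)

theorem ultimate_boundedness_general (N : ℕ) (B α : ℝ) (hB : 0 ≤ B) (hα : 0 < α)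
    (xt : ℝ → EuclideanSpace ℝ (Fin N))
    (V : ℝ → ℝ) (hVdiff : Differentiable ℝ V)
    (hV : ∀ t, V t = ‖xt t‖ ^ 2)
    (hrate : ∀ t, ‖xt t‖ > B → deriv V t ≤ -α * (‖xt t‖ - B)) :
    limsup (fun t => ‖xt t‖) atTop ≤ B := by
  refine limsup_le_of_forall_pos_eventually_le_add (fun t => norm_nonneg _) fun ε hε => ?_
  have hBε : 0 ≤ B + ε := by positivity
  have hderiv : ∀ t, (B + ε) ^ 2 < V t → deriv V t ≤ -(α * ε) := by
    intro t ht
    rw [hV] at ht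
    have hfar : B + ε < ‖xt t‖ := lt_of_pow_lt_pow_left₀ 2 (norm_nonneg _) ht
    nlinarith [hrate t (by linarith)]
  have hVnonneg : ∀ t, 0 ≤ V t := fun t => hV t ▸ by positivity
  filter_upwards [eventually_le_of_deriv_le_neg hVdiff hVnonneg (by positivity) hderiv] with t ht
  rw [hV] at ht
  exact (pow_le_pow_iff_left₀ (norm_nonneg _) hBε two_ne_zero).mp ht

theorem ultimate_boundedness (N : ℕ) (B α : ℝ) (hB : 0 ≤ B) (hα : 0 < α)
    (xt : ℝ → EuclideanSpace ℝ (Fin N)) (hcont : Continuous xt)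
    (V : ℝ → ℝ) (hVdiff : Differentiable ℝ V)
    (hV : ∀ t, V t = ‖xt t‖ ^ 2)
    (hdec : ∀ t, ‖xt t‖ > B → deriv V t < 0)
    (hrate : ∀ t, ‖xt t‖ > B → deriv V t ≤ -α * (‖xt t‖ - B)) :
    limsup (fun t => ‖xt t‖) atTop ≤ B :=
  ultimate_boundedness_general N B α hB hα xt V hVdiff hV hrate
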